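/- arXiv:1708.06678 — 4 statements merged into one kernel-verified Lean document; each statement's English description precedes it below -/
import Mathlib

section
/- Let β > 0, d ≥ 1, let w ∈ ℝ^d be a unit vector and ξ ∈ ℝ^d. If X ~ N(ξ, I_{d×d}), then E[f'(⟨w, X⟩)] ≤ 8β e^{−2β|⟨w, ξ⟩| + 2β²}, where f'(x) = β(1 − tanh²(βx)). -/
/-!
Since `1 - tanh² u = cosh⁻² u ≤ 4 e^{-2|u|}`, the integrand is at most `4β e^{-2β|⟨w, x⟩|}`.
Under `N(ξ, I)` the projection `⟨w, X⟩` of a unit vector `w` is `N(m, 1)` with `m = ⟨w, ξ⟩`,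
and `e^{-c|t|} ≤ e^{-c|m|} e^{c|t - m|} ≤ e^{-c|m|} (e^{c(t-m)} + e^{-c(t-m)})`, whose
expectation under `N(m, 1)` is `2 e^{-c|m| + c²/2}` by the Gaussian moment generating function.
Taking `c = 2β` gives the bound.
-/

open MeasureTheory ProbabilityTheory Real
open scoped NNReal RealInnerProductSpace

/-- The Gaussian measure on `EuclideanSpace ℝ (Fin d)` with mean `ξ` and covariance
`σ2` times the identity (i.e. i.i.d. `N(ξ i, σ2)` coordinates). -/
noncomputable def gaussE (d : ℕ) (ξ : EuclideanSpace ℝ (Fin d)) (σ2 : ℝ≥0) :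
    Measure (EuclideanSpace ℝ (Fin d)) :=
  (Measure.pi fun i : Fin d => gaussianReal (ξ i) σ2).map
    (MeasurableEquiv.toLp 2 (Fin d → ℝ))

@[fun_prop]
lemma Real.continuous_tanh : Continuous tanh := by
  rw [show tanh = fun x ↦ sinh x / cosh x from funext tanh_eq_sinh_div_cosh]
  exact continuous_sinh.div continuous_cosh fun x ↦ (cosh_pos x).ne'

lemma one_sub_tanh_sq_nonneg (u : ℝ) : 0 ≤ 1 - tanh u ^ 2 := by
  nlinarith [tanh_lt_one u, neg_one_lt_tanh u]

lemma one_sub_tanh_sq_le (u : ℝ) : 1 - tanh u ^ 2 ≤ 4 * exp (-(2 * |u|)) := by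
  have hcosh : exp |u| ≤ 2 * cosh u := by
    rw [← cosh_abs, cosh_eq]
    linarith [exp_pos (-|u|)]
  have hsech : 1 - tanh u ^ 2 = 1 / cosh u ^ 2 := by
    rw [tanh_eq_sinh_div_cosh, div_pow, eq_div_iff (by positivity), sub_mul,
      div_mul_cancel₀ _ (by positivity), cosh_sq]
    ring
  have hexp : exp (-(2 * |u|)) * exp |u| ^ 2 = 1 := by
    rw [sq, ← exp_add, ← exp_add]
    ring_nf
    exact exp_zero
  rw [hsech, div_le_iff₀ (by positivity)]
  nlinarith [mul_le_mul_of_nonneg_left (pow_le_pow_left₀ (exp_pos _).le hcosh 2)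
    (exp_pos (-(2 * |u|))).le]

lemma mul_one_sub_tanh_sq_mul_le {β : ℝ} (hβ : 0 ≤ β) (t : ℝ) :
    β * (1 - tanh (β * t) ^ 2) ≤ 4 * β * exp (-(2 * β * |t|)) :=
  calc β * (1 - tanh (β * t) ^ 2) ≤ β * (4 * exp (-(2 * |β * t|))) := by
        gcongr
        exact one_sub_tanh_sq_le _
    _ = 4 * β * exp (-(2 * β * |t|)) := by
        rw [abs_mul, abs_of_nonneg hβ]
        ring_nf

lemma integrable_exp_neg_mul_abs (μ : Measure ℝ) [IsFiniteMeasure μ] {c : ℝ} (hc : 0 ≤ c) :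
    Integrable (fun t ↦ exp (-(c * |t|))) μ :=
  Integrable.of_bound (by fun_prop) 1 (ae_of_all _ fun t ↦ by
    rw [norm_of_nonneg (exp_pos _).le, exp_le_one_iff, neg_nonpos]
    positivity)

lemma integral_exp_mul_gaussianReal (m : ℝ) (v : ℝ≥0) (t : ℝ) :
    ∫ x, exp (t * x) ∂gaussianReal m v = exp (m * t + v * t ^ 2 / 2) :=
  congrFun mgf_fun_id_gaussianReal t

lemma exp_neg_mul_abs_le (m x : ℝ) {c : ℝ} (hc : 0 ≤ c) :
    exp (-(c * |x|)) ≤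
      exp (-(c * |m|)) * (exp (-(c * m)) * exp (c * x) + exp (c * m) * exp (-c * x)) := by
  calc exp (-(c * |x|)) ≤ exp (-(c * |m|)) * exp |c * (x - m)| := by
        rw [← exp_add, abs_mul, abs_of_nonneg hc]
        gcongr
        nlinarith [abs_sub_abs_le_abs_sub m x, abs_sub_comm m x]
    _ ≤ exp (-(c * |m|)) * (exp (c * (x - m)) + exp (-(c * (x - m)))) := by
        gcongr
        exact exp_abs_le _
    _ = _ := by
        rw [← exp_add, ← exp_add]
        ring_nf

lemma integral_exp_neg_mul_abs_gaussianReal_le (m : ℝ) (v : ℝ≥0) {c : ℝ} (hc : 0 ≤ c) :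
    ∫ x, exp (-(c * |x|)) ∂gaussianReal m v ≤ 2 * exp (-(c * |m|) + v * c ^ 2 / 2) := by
  have hint (t : ℝ) (a : ℝ) : Integrable (fun x ↦ a * exp (t * x)) (gaussianReal m v) :=
    (integrable_exp_mul_gaussianReal t).const_mul a
  calc ∫ x, exp (-(c * |x|)) ∂gaussianReal m v
      ≤ ∫ x, exp (-(c * |m|)) * (exp (-(c * m)) * exp (c * x) + exp (c * m) * exp (-c * x))
          ∂gaussianReal m v :=
        integral_mono_of_nonneg (ae_of_all _ fun _ ↦ (exp_pos _).le)
          (((hint c _).add (hint (-c) _)).const_mul _)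
          (ae_of_all _ fun x ↦ exp_neg_mul_abs_le m x hc)
    _ = 2 * exp (-(c * |m|) + v * c ^ 2 / 2) := by
        rw [integral_const_mul, integral_add (hint c _) (hint (-c) _), integral_const_mul,
          integral_const_mul, integral_exp_mul_gaussianReal, integral_exp_mul_gaussianReal,
          ← exp_add, ← exp_add, show -(c * m) + (m * c + v * c ^ 2 / 2) = v * c ^ 2 / 2 by ring,
          show c * m + (m * -c + v * (-c) ^ 2 / 2) = v * c ^ 2 / 2 by ring, exp_add]
        ring

instance isProbabilityMeasure_gaussE (d : ℕ) (ξ : EuclideanSpace ℝ (Fin d)) (σ2 : ℝ≥0) :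
    IsProbabilityMeasure (gaussE d ξ σ2) :=
  Measure.isProbabilityMeasure_map (by fun_prop)

lemma gaussE_map_inner (d : ℕ) (ξ w : EuclideanSpace ℝ (Fin d)) (σ2 : ℝ≥0) :
    (gaussE d ξ σ2).map (fun x ↦ ⟪w, x⟫) = gaussianReal ⟪w, ξ⟫ (σ2 * ‖w‖₊ ^ 2) := by
  apply Measure.ext_of_charFun
  ext s
  rw [show (fun x ↦ ⟪w, x⟫) = ⇑(innerSL ℝ w) from rfl, charFun_map_eq_charFunDual_smul,
    ← map_smul]
  refine (charFun_eq_charFunDual_toDualMap (s • w)).symm.trans ?_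
  rw [gaussE, MeasurableEquiv.coe_toLp, charFun_pi]
  simp only [charFun_gaussianReal]
  rw [← Complex.exp_sum]
  congr 1
  simp only [PiLp.smul_apply, smul_eq_mul, NNReal.coe_mul, NNReal.coe_pow, coe_nnnorm,
    EuclideanSpace.real_norm_sq_eq, PiLp.inner_apply, RCLike.inner_apply, conj_trivial]
  push_cast
  simp only [Finset.mul_sum, Finset.sum_mul, Finset.sum_div, ← Finset.sum_sub_distrib]
  refine Finset.sum_congr rfl fun i _ ↦ ?_
  ring

theorem stmt1_general (d : ℕ) (β : ℝ) (hβ : 0 < β)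
    (w ξ : EuclideanSpace ℝ (Fin d)) (hw : ‖w‖ = 1) :
    (∫ x, β * (1 - Real.tanh (β * ⟪w, x⟫) ^ 2) ∂(gaussE d ξ 1))
      ≤ 8 * β * Real.exp (-(2 * β * |⟪w, ξ⟫|) + 2 * β ^ 2) := by
  have hlaw : (gaussE d ξ 1).map (fun x ↦ ⟪w, x⟫) = gaussianReal ⟪w, ξ⟫ 1 := by
    rw [gaussE_map_inner, show ‖w‖₊ = 1 from NNReal.eq hw, one_pow, mul_one]
  rw [← integral_map (f := fun t ↦ β * (1 - tanh (β * t) ^ 2)) (by fun_prop)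
    (Continuous.aestronglyMeasurable (by fun_prop)), hlaw]
  calc ∫ t, β * (1 - tanh (β * t) ^ 2) ∂gaussianReal ⟪w, ξ⟫ 1
      ≤ ∫ t, 4 * β * exp (-(2 * β * |t|)) ∂gaussianReal ⟪w, ξ⟫ 1 :=
        integral_mono_of_nonneg
          (ae_of_all _ fun t ↦ mul_nonneg hβ.le (one_sub_tanh_sq_nonneg _))
          ((integrable_exp_neg_mul_abs _ (by positivity)).const_mul _)
          (ae_of_all _ (mul_one_sub_tanh_sq_mul_le hβ.le))
    _ = 4 * β * ∫ t, exp (-(2 * β * |t|)) ∂gaussianReal ⟪w, ξ⟫ 1 := integral_const_mul _ _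
    _ ≤ 4 * β * (2 * exp (-(2 * β * |⟪w, ξ⟫|) + (1 : ℝ≥0) * (2 * β) ^ 2 / 2)) := by
        gcongr
        exact integral_exp_neg_mul_abs_gaussianReal_le _ 1 (by positivity)
    _ = 8 * β * exp (-(2 * β * |⟪w, ξ⟫|) + 2 * β ^ 2) := by
        push_cast
        ring_nf

/-- Upper bound on the expected derivative coefficient: for a unit vector `w` and
`X ~ N(ξ, I)`, `E[f'(⟨w, X⟩)] ≤ 8 β e^{-2β|⟨w, ξ⟩| + 2β²}` where `f'(t) = β(1 - tanh²(βt))`. -/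
theorem stmt1 (d : ℕ) (hd : 1 ≤ d) (β : ℝ) (hβ : 0 < β)
    (w ξ : EuclideanSpace ℝ (Fin d)) (hw : ‖w‖ = 1) :
    (∫ x, β * (1 - Real.tanh (β * ⟪w, x⟫) ^ 2) ∂(gaussE d ξ 1))
      ≤ 8 * β * Real.exp (-(2 * β * |⟪w, ξ⟫|) + 2 * β ^ 2) :=
  stmt1_general d β hβ w ξ hw
end

section
/- Let d ≥ 1, n ≥ 1, M > 0, ξ ∈ ℝ^d, and let (X^{(1)}, Y^{(1)}), …, (X^{(n)}, Y^{(n)}) be i.i.d. pairs where each X^{(i)} ~ N(0, I_{d×d}) and |Y^{(i)}| ≤ M almost surely. Define v(ξ) = Σ_{i=1}^n e^{⟨ξ, X^{(i)}⟩} Y^{(i)} X^{(i)} ∈ ℝ^d. Then for every δ > 0, P(‖v(ξ) − E[v(ξ)]‖₂ ≥ nδ) ≤ e^{2‖ξ‖₂²} M² (d + 4‖ξ‖₂²) / (n δ²). -/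
/-!
Write `v(ξ) = ∑ᵢ Zᵢ` with `Zᵢ = e^{⟨ξ, Xᵢ⟩} Yᵢ Xᵢ`. By Chebyshev's inequality it suffices to bound
`E ‖v - E v‖²`. Coordinatewise, the variance of a sum of independent vectors is the sum of their
variances, and each of these is at most `E ‖Zᵢ‖² ≤ M² E[e^{⟨2ξ, X⟩} ‖X‖²]`. This Gaussian
expectation factorises over the coordinates of `X`, and its factors are read off the moment
generating function `t ↦ e^{t²/2}` of `N(0, 1)` and its second derivative:
`E[e^{cX}] = e^{c²/2}` and `E[X² e^{cX}] = (1 + c²) e^{c²/2}`; summing over the coordinates gives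
`E[e^{⟨a, X⟩} ‖X‖²] = e^{‖a‖²/2} (d + ‖a‖²)`.
-/

open MeasureTheory ProbabilityTheory Real
open scoped NNReal RealInnerProductSpace

lemma integral_sq_mul_exp_gaussianReal (m : ℝ) (v : ℝ≥0) (c : ℝ) :
    ∫ x, x ^ 2 * exp (c * x) ∂gaussianReal m v
      = (v + (m + v * c) ^ 2) * exp (m * c + v * c ^ 2 / 2) := by
  have hc : c ∈ interior (integrableExpSet id (gaussianReal m v)) := by simp
  have hderiv : ∀ t, HasDerivAt (fun t ↦ exp (m * t + v * t ^ 2 / 2))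
      ((m + v * t) * exp (m * t + v * t ^ 2 / 2)) t := fun t ↦ by
    refine (((hasDerivAt_id' t).const_mul m).fun_add
      (((hasDerivAt_pow 2 t).const_mul (v : ℝ)).div_const 2)).exp.congr_deriv ?_
    push_cast; ring
  have hderiv2 : HasDerivAt (fun t ↦ (m + v * t) * exp (m * t + v * t ^ 2 / 2))
      ((v + (m + v * c) ^ 2) * exp (m * c + v * c ^ 2 / 2)) c := by
    refine ((((hasDerivAt_id' c).const_mul (v : ℝ)).const_add m).fun_mul (hderiv c)).congr_deriv ?_
    ring
  have := iteratedDeriv_mgf hc 2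
  rw [mgf_id_gaussianReal, iteratedDeriv_succ, iteratedDeriv_one,
    funext fun t ↦ (hderiv t).deriv, hderiv2.deriv] at this
  simpa using this.symm

lemma exp_inner_mul_norm_sq_toLp {ι : Type*} [Fintype ι] [DecidableEq ι]
    (a : EuclideanSpace ℝ ι) (x : ι → ℝ) :
    exp ⟪a, WithLp.toLp 2 x⟫ * ‖WithLp.toLp 2 x‖ ^ 2
      = ∑ k, ∏ j, (if j = k then x j ^ 2 else 1) * exp (a j * x j) := by
  simp_rw [Finset.prod_mul_distrib, Finset.prod_ite_eq', Finset.mem_univ, if_true, ← exp_sum,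
    ← Finset.sum_mul, EuclideanSpace.real_norm_sq_eq, PiLp.inner_apply]
  simp [mul_comm]

lemma gaussE_zero_one (d : ℕ) : gaussE d 0 1
    = (Measure.pi fun _ : Fin d => gaussianReal 0 1).map (MeasurableEquiv.toLp 2 (Fin d → ℝ)) :=
  rfl

lemma integrable_ite_sq_mul_exp_gaussianReal (p : Prop) [Decidable p] (c : ℝ) :
    Integrable (fun t ↦ (if p then t ^ 2 else 1) * exp (c * t)) (gaussianReal 0 1) := by
  split_ifs
  · exact integrable_pow_mul_exp_of_mem_interior_integrableExpSet (X := id) (by simp) 2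
  · simpa using integrable_exp_mul_gaussianReal (μ := 0) (v := 1) c

lemma integral_ite_sq_mul_exp_gaussianReal (p : Prop) [Decidable p] (c : ℝ) :
    ∫ t, (if p then t ^ 2 else 1) * exp (c * t) ∂gaussianReal 0 1
      = (if p then 1 + c ^ 2 else 1) * exp (c ^ 2 / 2) := by
  split_ifs
  · simp [integral_sq_mul_exp_gaussianReal]
  · simpa [mgf] using congrFun (mgf_id_gaussianReal (μ := 0) (v := 1)) c

lemma integrable_exp_inner_mul_norm_sq_gaussE {d : ℕ} (a : EuclideanSpace ℝ (Fin d)) :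
    Integrable (fun x ↦ exp ⟪a, x⟫ * ‖x‖ ^ 2) (gaussE d 0 1) := by
  rw [gaussE_zero_one, integrable_map_equiv]
  simp only [Function.comp_def, MeasurableEquiv.coe_toLp, exp_inner_mul_norm_sq_toLp]
  exact integrable_finsetSum _ fun k _ ↦ Integrable.fintype_prod
    (f := fun j t ↦ (if j = k then t ^ 2 else 1) * exp (a j * t))
    fun j ↦ integrable_ite_sq_mul_exp_gaussianReal _ _

lemma integral_exp_inner_mul_norm_sq_gaussE {d : ℕ} (a : EuclideanSpace ℝ (Fin d)) :
    ∫ x, exp ⟪a, x⟫ * ‖x‖ ^ 2 ∂gaussE d 0 1 = exp (‖a‖ ^ 2 / 2) * (d + ‖a‖ ^ 2) := by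
  rw [gaussE_zero_one, integral_map_equiv]
  simp only [MeasurableEquiv.coe_toLp, exp_inner_mul_norm_sq_toLp]
  rw [integral_finsetSum _ fun k _ ↦ Integrable.fintype_prod
    (f := fun j t ↦ (if j = k then t ^ 2 else 1) * exp (a j * t))
    fun j ↦ integrable_ite_sq_mul_exp_gaussianReal _ _]
  have hk : ∀ k, ∫ x : Fin d → ℝ, ∏ j, (if j = k then x j ^ 2 else 1) * exp (a j * x j)
      ∂Measure.pi (fun _ ↦ gaussianReal 0 1) = (1 + a k ^ 2) * exp (∑ j, a j ^ 2 / 2) := fun k ↦ by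
    rw [integral_fintype_prod_eq_prod (f := fun j t ↦ (if j = k then t ^ 2 else 1) * exp (a j * t))]
    simp_rw [integral_ite_sq_mul_exp_gaussianReal, Finset.prod_mul_distrib, Finset.prod_ite_eq',
      Finset.mem_univ, if_true, exp_sum]
  simp_rw [hk, ← Finset.sum_mul, Finset.sum_add_distrib, ← Finset.sum_div,
    EuclideanSpace.real_norm_sq_eq]
  simp only [Finset.sum_const, Finset.card_univ, Fintype.card_fin, nsmul_eq_mul, mul_one]
  ring

section

variable {Ω κ : Type*} [MeasurableSpace Ω] {μ : Measure Ω} [Fintype κ]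

lemma integral_norm_sub_integral_sq_eq_sum_variance [IsFiniteMeasure μ]
    {Y : Ω → EuclideanSpace ℝ κ} (hY : MemLp Y 2 μ) :
    ∫ ω, ‖Y ω - ∫ ω', Y ω' ∂μ‖ ^ 2 ∂μ = ∑ k, Var[fun ω ↦ Y ω k; μ] := by
  simp_rw [EuclideanSpace.real_norm_sq_eq, PiLp.sub_apply,
    eval_integral_piLp (hY.integrable one_le_two).eval_piLp]
  rw [integral_finsetSum]
  · exact Finset.sum_congr rfl fun k _ ↦
      (variance_eq_integral (hY.eval_piLp k).aemeasurable).symm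
  · exact fun k _ ↦ ((hY.eval_piLp k).sub (memLp_const _)).integrable_sq

lemma integral_norm_sub_integral_sq_le_integral_norm_sq [IsProbabilityMeasure μ]
    {Y : Ω → EuclideanSpace ℝ κ} (hY : MemLp Y 2 μ) :
    ∫ ω, ‖Y ω - ∫ ω', Y ω' ∂μ‖ ^ 2 ∂μ ≤ ∫ ω, ‖Y ω‖ ^ 2 ∂μ := by
  simp_rw [integral_norm_sub_integral_sq_eq_sum_variance hY, EuclideanSpace.real_norm_sq_eq]
  rw [integral_finsetSum _ fun k _ ↦ (hY.eval_piLp k).integrable_sq]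
  exact Finset.sum_le_sum fun k _ ↦
    variance_le_expectation_sq (hY.eval_piLp k).aestronglyMeasurable

lemma integral_norm_sum_sub_integral_sq [IsProbabilityMeasure μ] {ι : Type*} [Fintype ι]
    {Z : ι → Ω → EuclideanSpace ℝ κ} (hZ : ∀ i, MemLp (Z i) 2 μ) (hindep : iIndepFun Z μ) :
    ∫ ω, ‖∑ i, Z i ω - ∫ ω', ∑ i, Z i ω' ∂μ‖ ^ 2 ∂μ
      = ∑ i, ∫ ω, ‖Z i ω - ∫ ω', Z i ω' ∂μ‖ ^ 2 ∂μ := by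
  have hsum : MemLp (fun ω ↦ ∑ i, Z i ω) 2 μ := memLp_finsetSum _ fun i _ ↦ hZ i
  simp_rw [integral_norm_sub_integral_sq_eq_sum_variance hsum,
    integral_norm_sub_integral_sq_eq_sum_variance (hZ _)]
  rw [Finset.sum_comm]
  refine Finset.sum_congr rfl fun k _ ↦ ?_
  have hcoord_indep : iIndepFun (fun i ω ↦ Z i ω k) μ :=
    hindep.comp (fun _ x ↦ x k) fun _ ↦ by fun_prop
  have := IndepFun.variance_sum (s := Finset.univ) (fun i _ ↦ (hZ i).eval_piLp k)
    fun i _ j _ hij ↦ hcoord_indep.indepFun hij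
  simpa only [Finset.sum_fn, WithLp.ofLp_sum, Finset.sum_apply] using this

lemma measureReal_norm_ge_le_integral_norm_sq_div_sq {E : Type*} [NormedAddCommGroup E]
    {f : Ω → E} (hf : Integrable (fun ω ↦ ‖f ω‖ ^ 2) μ) {ε : ℝ} (hε : 0 < ε) :
    μ.real {ω | ε ≤ ‖f ω‖} ≤ (∫ ω, ‖f ω‖ ^ 2 ∂μ) / ε ^ 2 := by
  have hset : {ω | ε ≤ ‖f ω‖} = {ω | ε ^ 2 ≤ ‖f ω‖ ^ 2} := by
    ext ω
    simp [pow_le_pow_iff_left₀ hε.le (norm_nonneg _) two_ne_zero]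
  rw [hset, le_div_iff₀ (by positivity), mul_comm]
  exact mul_meas_ge_le_integral_of_nonneg (ae_of_all _ fun _ ↦ by positivity) hf _

end

section

variable {Ω : Type*} [MeasurableSpace Ω] {μ : Measure Ω} {d : ℕ}
  {X : Ω → EuclideanSpace ℝ (Fin d)} {Y : Ω → ℝ} {M : ℝ}

lemma integrable_exp_inner_mul_norm_sq_of_map_eq_gaussE (hX : Measurable X)
    (hlaw : μ.map X = gaussE d 0 1) (a : EuclideanSpace ℝ (Fin d)) :
    Integrable (fun ω ↦ exp ⟪a, X ω⟫ * ‖X ω‖ ^ 2) μ :=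
  (integrable_map_measure (g := fun x ↦ exp ⟪a, x⟫ * ‖x‖ ^ 2) (by fun_prop) hX.aemeasurable).mp
    (hlaw ▸ integrable_exp_inner_mul_norm_sq_gaussE a)

lemma integral_exp_inner_mul_norm_sq_of_map_eq_gaussE (hX : Measurable X)
    (hlaw : μ.map X = gaussE d 0 1) (a : EuclideanSpace ℝ (Fin d)) :
    ∫ ω, exp ⟪a, X ω⟫ * ‖X ω‖ ^ 2 ∂μ = exp (‖a‖ ^ 2 / 2) * (d + ‖a‖ ^ 2) := by
  rw [← integral_exp_inner_mul_norm_sq_gaussE a, ← hlaw, integral_map hX.aemeasurable (by fun_prop)]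

lemma norm_exp_inner_mul_smul_sq_le {E : Type*} [NormedAddCommGroup E] [InnerProductSpace ℝ E]
    (ξ x : E) {y : ℝ} (hy : |y| ≤ M) :
    ‖(exp ⟪ξ, x⟫ * y) • x‖ ^ 2 ≤ M ^ 2 * (exp ⟪(2 : ℝ) • ξ, x⟫ * ‖x‖ ^ 2) := by
  have hy2 : y ^ 2 ≤ M ^ 2 := by simpa only [sq_abs] using pow_le_pow_left₀ (abs_nonneg y) hy 2
  have hexp : exp ⟪(2 : ℝ) • ξ, x⟫ = exp ⟪ξ, x⟫ ^ 2 := by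
    rw [real_inner_smul_left, sq, ← exp_add, two_mul]
  rw [norm_smul, mul_pow, Real.norm_eq_abs, abs_mul, abs_of_pos (exp_pos _), mul_pow, sq_abs, hexp]
  nlinarith [mul_nonneg (pow_nonneg (exp_pos ⟪ξ, x⟫).le 2) (sq_nonneg ‖x‖)]

lemma memLp_two_exp_inner_mul_smul (hX : Measurable X) (hY : Measurable Y)
    (hlaw : μ.map X = gaussE d 0 1) (hYM : ∀ᵐ ω ∂μ, |Y ω| ≤ M) (ξ : EuclideanSpace ℝ (Fin d)) :
    MemLp (fun ω ↦ (exp ⟪ξ, X ω⟫ * Y ω) • X ω) 2 μ := by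
  rw [memLp_two_iff_integrable_sq_norm (by fun_prop)]
  refine ((integrable_exp_inner_mul_norm_sq_of_map_eq_gaussE hX hlaw ((2 : ℝ) • ξ)).const_mul
    (M ^ 2)).mono' (by fun_prop) ?_
  filter_upwards [hYM] with ω hω
  rw [Real.norm_eq_abs, abs_of_nonneg (by positivity)]
  exact norm_exp_inner_mul_smul_sq_le ξ (X ω) hω

lemma integral_norm_exp_inner_mul_smul_sq_le (hX : Measurable X) (hY : Measurable Y)
    (hlaw : μ.map X = gaussE d 0 1) (hYM : ∀ᵐ ω ∂μ, |Y ω| ≤ M) (ξ : EuclideanSpace ℝ (Fin d)) :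
    ∫ ω, ‖(exp ⟪ξ, X ω⟫ * Y ω) • X ω‖ ^ 2 ∂μ
      ≤ M ^ 2 * (exp (2 * ‖ξ‖ ^ 2) * (d + 4 * ‖ξ‖ ^ 2)) := by
  have hnorm : ‖(2 : ℝ) • ξ‖ ^ 2 = 4 * ‖ξ‖ ^ 2 := by
    rw [norm_smul, mul_pow, Real.norm_two]; norm_num
  calc ∫ ω, ‖(exp ⟪ξ, X ω⟫ * Y ω) • X ω‖ ^ 2 ∂μ
      ≤ ∫ ω, M ^ 2 * (exp ⟪(2 : ℝ) • ξ, X ω⟫ * ‖X ω‖ ^ 2) ∂μ :=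
        integral_mono_ae ((memLp_two_iff_integrable_sq_norm (by fun_prop)).mp
            (memLp_two_exp_inner_mul_smul hX hY hlaw hYM ξ))
          ((integrable_exp_inner_mul_norm_sq_of_map_eq_gaussE hX hlaw _).const_mul _)
          (hYM.mono fun ω hω ↦ norm_exp_inner_mul_smul_sq_le ξ (X ω) hω)
    _ = M ^ 2 * (exp (2 * ‖ξ‖ ^ 2) * (d + 4 * ‖ξ‖ ^ 2)) := by
        rw [integral_const_mul, integral_exp_inner_mul_norm_sq_of_map_eq_gaussE hX hlaw, hnorm]
        ring_nf

end

theorem stmt10_general {Ω : Type} [MeasurableSpace Ω] (μ : Measure Ω) [IsProbabilityMeasure μ]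
    (d n : ℕ) (hn : 1 ≤ n) (M : ℝ)
    (ξ : EuclideanSpace ℝ (Fin d))
    (X : Fin n → Ω → EuclideanSpace ℝ (Fin d)) (Y : Fin n → Ω → ℝ)
    (hmeas : ∀ i, Measurable fun ω => (X i ω, Y i ω))
    (hindep : iIndepFun (fun i ω => (X i ω, Y i ω)) μ)
    (hX : ∀ i, Measure.map (X i) μ = gaussE d 0 1)
    (hY : ∀ i, ∀ᵐ ω ∂μ, |Y i ω| ≤ M) :
    ∀ δ : ℝ, 0 < δ →
      (μ {ω | (n : ℝ) * δ ≤
          ‖(∑ i, (Real.exp ⟪ξ, X i ω⟫ * Y i ω) • X i ω)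
            - ∫ ω', ∑ i, (Real.exp ⟪ξ, X i ω'⟫ * Y i ω') • X i ω' ∂μ‖}).toReal
        ≤ Real.exp (2 * ‖ξ‖ ^ 2) * M ^ 2 * (d + 4 * ‖ξ‖ ^ 2) / (n * δ ^ 2) := by
  intro δ hδ
  set Z : Fin n → Ω → EuclideanSpace ℝ (Fin d) := fun i ω ↦ (exp ⟪ξ, X i ω⟫ * Y i ω) • X i ω
  set C := M ^ 2 * (exp (2 * ‖ξ‖ ^ 2) * (d + 4 * ‖ξ‖ ^ 2))
  have hXm i : Measurable (X i) := measurable_fst.comp (hmeas i)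
  have hYm i : Measurable (Y i) := measurable_snd.comp (hmeas i)
  have hZ i : MemLp (Z i) 2 μ := memLp_two_exp_inner_mul_smul (hXm i) (hYm i) (hX i) (hY i) ξ
  have hZ_indep : iIndepFun Z μ :=
    hindep.comp (fun _ p ↦ (exp ⟪ξ, p.1⟫ * p.2) • p.1) fun _ ↦ by fun_prop
  have hcentred : MemLp (fun ω ↦ ∑ i, Z i ω - ∫ ω', ∑ i, Z i ω' ∂μ) 2 μ :=
    (memLp_finsetSum _ fun i _ ↦ hZ i).sub (memLp_const _)
  have hsecond : ∫ ω, ‖∑ i, Z i ω - ∫ ω', ∑ i, Z i ω' ∂μ‖ ^ 2 ∂μ ≤ n * C := by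
    rw [integral_norm_sum_sub_integral_sq hZ hZ_indep]
    calc _ ≤ ∑ _ : Fin n, C := Finset.sum_le_sum fun i _ ↦
          (integral_norm_sub_integral_sq_le_integral_norm_sq (hZ i)).trans
            (integral_norm_exp_inner_mul_smul_sq_le (hXm i) (hYm i) (hX i) (hY i) ξ)
      _ = n * C := by simp
  have hnδ : 0 < (n : ℝ) * δ := mul_pos (by exact_mod_cast hn) hδ
  calc (μ _).toReal ≤ (∫ ω, ‖∑ i, Z i ω - ∫ ω', ∑ i, Z i ω' ∂μ‖ ^ 2 ∂μ) / ((n : ℝ) * δ) ^ 2 :=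
        measureReal_norm_ge_le_integral_norm_sq_div_sq
          ((memLp_two_iff_integrable_sq_norm hcentred.1).mp hcentred) hnδ
    _ ≤ n * C / ((n : ℝ) * δ) ^ 2 := by gcongr
    _ = _ := by field_simp; ring

/-- For i.i.d. pairs `(X⁽ⁱ⁾, Y⁽ⁱ⁾)` with standard Gaussian covariates and responses
bounded by `M`, the vector `v(ξ) = Σᵢ e^{⟨ξ, X⁽ⁱ⁾⟩} Y⁽ⁱ⁾ X⁽ⁱ⁾` satisfies
`P(‖v(ξ) - E v(ξ)‖ ≥ nδ) ≤ e^{2‖ξ‖²} M² (d + 4‖ξ‖²)/(nδ²)`. -/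
theorem stmt10 {Ω : Type} [MeasurableSpace Ω] (μ : Measure Ω) [IsProbabilityMeasure μ]
    (d n : ℕ) (hd : 1 ≤ d) (hn : 1 ≤ n) (M : ℝ) (hM : 0 < M)
    (ξ : EuclideanSpace ℝ (Fin d))
    (X : Fin n → Ω → EuclideanSpace ℝ (Fin d)) (Y : Fin n → Ω → ℝ)
    (hmeas : ∀ i, Measurable fun ω => (X i ω, Y i ω))
    (hindep : iIndepFun (fun i ω => (X i ω, Y i ω)) μ)
    (hident : ∀ i j, Measure.map (fun ω => (X i ω, Y i ω)) μ
        = Measure.map (fun ω => (X j ω, Y j ω)) μ)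
    (hX : ∀ i, Measure.map (X i) μ = gaussE d 0 1)
    (hY : ∀ i, ∀ᵐ ω ∂μ, |Y i ω| ≤ M) :
    ∀ δ : ℝ, 0 < δ →
      (μ {ω | (n : ℝ) * δ ≤
          ‖(∑ i, (Real.exp ⟪ξ, X i ω⟫ * Y i ω) • X i ω)
            - ∫ ω', ∑ i, (Real.exp ⟪ξ, X i ω'⟫ * Y i ω') • X i ω' ∂μ‖}).toReal
        ≤ Real.exp (2 * ‖ξ‖ ^ 2) * M ^ 2 * (d + 4 * ‖ξ‖ ^ 2) / (n * δ ^ 2) :=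
  stmt10_general μ d n hn M ξ X Y hmeas hindep hX hY
end

section
/- Let d ≥ k ≥ 1 and θ ∈ [0, π]. Let {e_1, …, e_k} and {ê_1, …, ê_k} be two orthonormal families in ℝ^d with ‖e_ℓ − ê_ℓ‖₂ ≤ 2 sin(θ/2) for every ℓ ∈ {1, …, k}. Let P and P̂ be the d×k matrices whose columns are e_1, …, e_k and ê_1, …, ê_k respectively, and let M be the column span of P. Then for every w ∈ M with ‖w‖₂ = 1 and every x ∈ ℝ^d, |⟨w, x⟩ − ⟨P̂ᵀw, P̂ᵀx⟩| ≤ 4k sin(θ/2) ‖x‖₂. In particular, for all w, w' ∈ M with ‖w‖₂ = ‖w'‖₂ = 1, |⟨w, w'⟩ − ⟨P̂ᵀw, P̂ᵀw'⟩| ≤ 4k sin(θ/2). -/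
open Real
open scoped RealInnerProductSpace

/-- If `e` and `ê` are orthonormal families with `‖e_ℓ - ê_ℓ‖ ≤ 2 sin(θ/2)`, then for any
unit `w` in the span `M` of `e` and any `x`, the inner product `⟨w, x⟩` differs from
`⟨P̂ᵀw, P̂ᵀx⟩ = Σ_ℓ ⟨ê_ℓ, w⟩⟨ê_ℓ, x⟩` by at most `4k sin(θ/2) ‖x‖`; in particular for
unit `w, w' ∈ M` the difference of inner products is at most `4k sin(θ/2)`. -/
theorem stmt16 (d k : ℕ) (hk : 1 ≤ k) (hdk : k ≤ d) (θ : ℝ) (hθ : θ ∈ Set.Icc 0 π)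
    (e ehat : Fin k → EuclideanSpace ℝ (Fin d))
    (he : Orthonormal ℝ e) (hehat : Orthonormal ℝ ehat)
    (hclose : ∀ ℓ, ‖e ℓ - ehat ℓ‖ ≤ 2 * Real.sin (θ / 2)) :
    (∀ w ∈ Submodule.span ℝ (Set.range e), ‖w‖ = 1 →
      ∀ x : EuclideanSpace ℝ (Fin d),
        |⟪w, x⟫ - ∑ ℓ, ⟪ehat ℓ, w⟫ * ⟪ehat ℓ, x⟫| ≤ 4 * k * Real.sin (θ / 2) * ‖x‖) ∧
    (∀ w ∈ Submodule.span ℝ (Set.range e), ‖w‖ = 1 →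
      ∀ w' ∈ Submodule.span ℝ (Set.range e), ‖w'‖ = 1 →
        |⟪w, w'⟫ - ∑ ℓ, ⟪ehat ℓ, w⟫ * ⟪ehat ℓ, w'⟫| ≤ 4 * k * Real.sin (θ / 2)) := by
  obtain ⟨hθ0, hθπ⟩ := hθ
  have hs0 : 0 ≤ Real.sin (θ / 2) :=
    Real.sin_nonneg_of_nonneg_of_le_pi (by linarith) (by linarith [Real.pi_pos])
  set s : ℝ := Real.sin (θ / 2) with hs_def
  set err : Fin k → EuclideanSpace ℝ (Fin d) :=
    fun m => e m - ∑ ℓ, ⟪ehat ℓ, e m⟫ • ehat ℓ with herr_def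
  have herr_inner : ∀ m (x : EuclideanSpace ℝ (Fin d)),
      ⟪err m, x⟫ = ⟪e m, x⟫ - ∑ ℓ, ⟪ehat ℓ, e m⟫ * ⟪ehat ℓ, x⟫ := by
    intro m x
    simp only [herr_def, inner_sub_left, sum_inner, real_inner_smul_left]
  have herr_norm : ∀ m, ‖err m‖ ≤ 2 * s := by
    intro m
    set v : EuclideanSpace ℝ (Fin d) := e m - ehat m with hv_def
    set Qv : EuclideanSpace ℝ (Fin d) := ∑ ℓ, ⟪ehat ℓ, v⟫ • ehat ℓ with hQv_def
    have hQe : (∑ ℓ, ⟪ehat ℓ, ehat m⟫ • ehat ℓ) = ehat m := by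
      have hite := orthonormal_iff_ite.mp hehat
      simp [hite]
    have herr_eq : err m = v - Qv := by
      simp only [herr_def, hQv_def, hv_def, inner_sub_right, sub_smul, Finset.sum_sub_distrib]
      rw [hQe]
      abel
    have hperp : ∀ ℓ, ⟪v - Qv, ehat ℓ⟫ = 0 := by
      intro ℓ
      have h1 : ⟪ehat ℓ, Qv⟫ = ⟪ehat ℓ, v⟫ :=
        hehat.inner_right_fintype (fun j => ⟪ehat j, v⟫) ℓ
      have h2 := real_inner_comm Qv (ehat ℓ)
      have h3 := real_inner_comm v (ehat ℓ)
      rw [inner_sub_left]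
      linarith
    have horth : ⟪v - Qv, Qv⟫ = 0 := by
      rw [hQv_def, inner_sum]
      apply Finset.sum_eq_zero
      intro ℓ _
      rw [real_inner_smul_right, ← hQv_def, hperp ℓ]
      ring
    have hsq := norm_add_sq_real (v - Qv) Qv
    rw [horth] at hsq
    have hvv : v - Qv + Qv = v := by abel
    rw [hvv] at hsq
    have hnorm2 : ‖v - Qv‖ ^ 2 ≤ ‖v‖ ^ 2 := by nlinarith [norm_nonneg Qv]
    have hv_le : ‖v‖ ≤ 2 * s := hclose m
    rw [herr_eq]
    nlinarith [norm_nonneg (v - Qv), norm_nonneg v]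
  have key : ∀ w ∈ Submodule.span ℝ (Set.range e), ‖w‖ = 1 →
      ∀ x : EuclideanSpace ℝ (Fin d),
        |⟪w, x⟫ - ∑ ℓ, ⟪ehat ℓ, w⟫ * ⟪ehat ℓ, x⟫| ≤ 4 * k * s * ‖x‖ := by
    intro w hw hw1 x
    rw [Submodule.mem_span_range_iff_exists_fun] at hw
    obtain ⟨c, hc⟩ := hw
    have hcw : ∀ m, ⟪e m, w⟫ = c m := by
      intro m
      rw [← hc]
      exact he.inner_right_fintype c m
    have hcm : ∀ m, |c m| ≤ 1 := by
      have h1 : ⟪w, w⟫ = ∑ m, c m * c m := by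
        nth_rewrite 1 [← hc]
        rw [sum_inner]
        simp only [real_inner_smul_left, hcw]
      have h2 : ⟪w, w⟫ = 1 := by
        rw [real_inner_self_eq_norm_sq, hw1]; norm_num
      intro m
      have h4 : c m * c m ≤ ∑ i, c i * c i :=
        Finset.single_le_sum (f := fun i => c i * c i)
          (fun i _ => mul_self_nonneg (c i)) (Finset.mem_univ m)
      have h3 : c m * c m ≤ 1 := by rw [h1] at h2; linarith
      nlinarith [abs_nonneg (c m), abs_mul_abs_self (c m)]
    have hwx : ⟪w, x⟫ = ∑ m, c m * ⟪e m, x⟫ := by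
      conv_lhs => rw [← hc, sum_inner]
      simp only [real_inner_smul_left]
    have hew : ∀ ℓ, ⟪ehat ℓ, w⟫ = ∑ m, c m * ⟪ehat ℓ, e m⟫ := by
      intro ℓ
      conv_lhs => rw [← hc, inner_sum]
      simp only [real_inner_smul_right]
    have hexp : ⟪w, x⟫ - ∑ ℓ, ⟪ehat ℓ, w⟫ * ⟪ehat ℓ, x⟫ = ∑ m, c m * ⟪err m, x⟫ := by
      simp only [hwx, hew, herr_inner, mul_sub, Finset.mul_sum, Finset.sum_mul,
        Finset.sum_sub_distrib]
      congr 1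
      rw [Finset.sum_comm]
      apply Finset.sum_congr rfl
      intro m _
      apply Finset.sum_congr rfl
      intro ℓ _
      ring
    rw [hexp]
    calc |∑ m, c m * ⟪err m, x⟫| ≤ ∑ m, |c m * ⟪err m, x⟫| :=
        Finset.abs_sum_le_sum_abs _ _
      _ ≤ ∑ _m : Fin k, 1 * (2 * s * ‖x‖) := by
          apply Finset.sum_le_sum
          intro m _
          rw [abs_mul]
          apply mul_le_mul (hcm m) ?_ (abs_nonneg _) zero_le_one
          calc |⟪err m, x⟫| ≤ ‖err m‖ * ‖x‖ := abs_real_inner_le_norm _ _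
            _ ≤ 2 * s * ‖x‖ :=
                mul_le_mul_of_nonneg_right (herr_norm m) (norm_nonneg x)
      _ = k * (2 * s * ‖x‖) := by
          rw [Finset.sum_const, Finset.card_univ, Fintype.card_fin, nsmul_eq_mul]
          ring
      _ ≤ 4 * k * s * ‖x‖ := by
          have h5 : 0 ≤ (k:ℝ) * s * ‖x‖ := by positivity
          nlinarith [h5]
  refine ⟨key, ?_⟩
  intro w hw hw1 w' hw' hw1'
  have h := key w hw hw1 w'
  rw [hw1', mul_one] at h
  exact h
end

section
/- Let d ≥ k ≥ 1 and θ ∈ [0, π]. Let {e_1, …, e_k} and {ê_1, …, ê_k} be two orthonormal families in ℝ^d with ‖e_ℓ − ê_ℓ‖₂ ≤ 2 sin(θ/2) for every ℓ ∈ {1, …, k}. Let P and P̂ be the d×k matrices whose columns are e_1, …, e_k and ê_1, …, ê_k respectively, and let M be the column span of P. Then for every w ∈ M with ‖w‖₂ = 1, the orthogonal projection P̂P̂ᵀw of w onto the column span of P̂ satisfies ‖w − P̂P̂ᵀw‖₂ ≤ 2 √(k sin(θ/2)). -/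
open Real
open scoped RealInnerProductSpace

/-- If `e` and `ê` are orthonormal families with `‖e_ℓ - ê_ℓ‖ ≤ 2 sin(θ/2)`, then every
unit `w` in the span of `e` satisfies `‖w - P̂P̂ᵀw‖ ≤ 2√(k sin(θ/2))`, where
`P̂P̂ᵀw = Σ_ℓ ⟨ê_ℓ, w⟩ ê_ℓ` is the orthogonal projection onto the span of `ê`. -/
theorem stmt17 (d k : ℕ) (hk : 1 ≤ k) (hdk : k ≤ d) (θ : ℝ) (hθ : θ ∈ Set.Icc 0 π)
    (e ehat : Fin k → EuclideanSpace ℝ (Fin d))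
    (he : Orthonormal ℝ e) (hehat : Orthonormal ℝ ehat)
    (hclose : ∀ ℓ, ‖e ℓ - ehat ℓ‖ ≤ 2 * Real.sin (θ / 2)) :
    ∀ w ∈ Submodule.span ℝ (Set.range e), ‖w‖ = 1 →
      ‖w - ∑ ℓ, ⟪ehat ℓ, w⟫ • ehat ℓ‖ ≤ 2 * Real.sqrt (k * Real.sin (θ / 2)) := by
  intro w hw hnorm
  obtain ⟨c, hc⟩ := (Submodule.mem_span_range_iff_exists_fun ℝ).mp hw
  set s : ℝ := Real.sin (θ / 2) with hs
  have hs0 : 0 ≤ s := Real.sin_nonneg_of_nonneg_of_le_pi (by linarith [hθ.1])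
    (by nlinarith [hθ.2, Real.pi_pos])
  have hs1 : s ≤ 1 := Real.sin_le_one _
  -- sum of squares of coefficients is 1
  have hc2 : ∑ i, c i ^ 2 = 1 := by
    have := he.inner_sum c c Finset.univ
    rw [hc] at this
    simp only [real_inner_self_eq_norm_sq, hnorm, starRingEnd_apply, star_trivial] at this
    simp only [pow_two]
    linarith
  -- the candidate approximation in span ehat
  set p : EuclideanSpace ℝ (Fin d) := ∑ ℓ, ⟪ehat ℓ, w⟫ • ehat ℓ with hp
  set v : EuclideanSpace ℝ (Fin d) := ∑ ℓ, c ℓ • ehat ℓ with hv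
  -- orthogonality: w - p ⊥ each ehat j
  have horth : ∀ j, ⟪w - p, ehat j⟫ = 0 := by
    intro j
    rw [inner_sub_left, hp, hehat.inner_left_fintype]
    simp only [starRingEnd_apply, star_trivial]
    rw [real_inner_comm, sub_self]
  have hperp : ⟪w - p, p - v⟫ = 0 := by
    have : p - v = ∑ ℓ, (⟪ehat ℓ, w⟫ - c ℓ) • ehat ℓ := by
      rw [hp, hv, ← Finset.sum_sub_distrib]
      simp [sub_smul]
    rw [this, inner_sum]
    simp only [inner_smul_right, horth, mul_zero, Finset.sum_const_zero]
  -- Pythagoras: ‖w - p‖ ≤ ‖w - v‖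
  have hwp : ‖w - p‖ ≤ ‖w - v‖ := by
    have h1 : ‖w - v‖ ^ 2 = ‖w - p‖ ^ 2 + 2 * ⟪w - p, p - v⟫ + ‖p - v‖ ^ 2 := by
      have : w - v = (w - p) + (p - v) := by abel
      rw [this, norm_add_sq_real]
    rw [hperp] at h1
    nlinarith [norm_nonneg (w - v), norm_nonneg (w - p), norm_nonneg (p - v)]
  -- bound ‖w - v‖
  have hwv : ‖w - v‖ ≤ (∑ i, |c i|) * (2 * s) := by
    have : w - v = ∑ ℓ, c ℓ • (e ℓ - ehat ℓ) := by
      rw [← hc, hv, ← Finset.sum_sub_distrib]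
      simp [smul_sub]
    rw [this]
    calc ‖∑ ℓ, c ℓ • (e ℓ - ehat ℓ)‖ ≤ ∑ ℓ, ‖c ℓ • (e ℓ - ehat ℓ)‖ :=
          norm_sum_le _ _
      _ ≤ ∑ ℓ, |c ℓ| * (2 * s) := by
          apply Finset.sum_le_sum
          intro i _
          rw [norm_smul, Real.norm_eq_abs]
          exact mul_le_mul_of_nonneg_left (hclose i) (abs_nonneg _)
      _ = (∑ i, |c i|) * (2 * s) := by rw [← Finset.sum_mul]
  -- Cauchy–Schwarz: ∑ |c i| ≤ √k
  have hcs : (∑ i, |c i|) ≤ Real.sqrt k := by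
    have h1 : (∑ i, |c i|) ^ 2 ≤ (k : ℝ) * ∑ i, |c i| ^ 2 := by
      have := sq_sum_le_card_mul_sum_sq (s := (Finset.univ : Finset (Fin k)))
        (f := fun i => |c i|)
      simpa using this
    have h2 : (∑ i, |c i| ^ 2) = 1 := by simpa [sq_abs] using hc2
    rw [h2, mul_one] at h1
    have h3 := Real.sqrt_le_sqrt h1
    rwa [Real.sqrt_sq (by positivity)] at h3
  -- combine
  have hfinal : (Real.sqrt k) * (2 * s) ≤ 2 * Real.sqrt (k * s) := by
    have : Real.sqrt k * s = Real.sqrt (k * s ^ 2) := by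
      rw [Real.sqrt_mul (Nat.cast_nonneg k), Real.sqrt_sq hs0]
    calc Real.sqrt k * (2 * s) = 2 * Real.sqrt (k * s ^ 2) := by rw [← this]; ring
      _ ≤ 2 * Real.sqrt (k * s) := by
          apply mul_le_mul_of_nonneg_left _ (by norm_num)
          apply Real.sqrt_le_sqrt
          have hss : s ^ 2 ≤ s := by nlinarith
          exact mul_le_mul_of_nonneg_left hss (Nat.cast_nonneg k)
  calc ‖w - p‖ ≤ ‖w - v‖ := hwp
    _ ≤ (∑ i, |c i|) * (2 * s) := hwv
    _ ≤ Real.sqrt k * (2 * s) := mul_le_mul_of_nonneg_right hcs (by positivity)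
    _ ≤ 2 * Real.sqrt (k * s) := hfinal
end
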